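/- There exists a constant d > 0, depending only on the channel W_{Z|X[K]}, such that for every (n, M₁,…,M_K, L₁,…,L_K) code the following holds. Let Xₖⁿ := f_k(W_k, S_k) be user k's random codeword (with the (W_k, S_k) independent and uniform), let Zⁿ be the warden's observation from n memoryless uses of W_{Z|X[K]}, let μ_{kj} := (M_k L_k)^{-1} Σ_{m,ℓ} 1{ (f_k(m,ℓ))_j = 1 } for j ∈ {1,…,n}, and μ_max := max_{k,j} μ_{kj}. Then I(X₁ⁿ,…,X_Kⁿ; Zⁿ) ≥ Σ_{j=1}^n Σ_{k=1}^K μ_{kj}·D(Q_k‖Q_∅) − d·μ_max·Σ_{k=1}^K Σ_{j=1}^n μ_{kj} − D(Q̂ⁿ‖Q_∅^{⊗n}). -/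

import Mathlib

/-!
By the golden formula, `I(Xⁿ; Zⁿ) = Σₓ P(x) D(W^{⊗n}_x ‖ Q_∅^{⊗n}) - D(Q̂ⁿ ‖ Q_∅^{⊗n})`.
Divergence tensorizes over the memoryless channel, and the `j`-th symbols of the independent
codewords are independent `Bernoulli(μ_{kj})` bits, so the first term is
`Σⱼ Σᵥ (∏ₖ Bern(μ_{kj})(vₖ)) D(W_v ‖ Q_∅)`. Keeping only the inputs `v = xU {k}` with a single
active user and using `∏_{k' ≠ k} (1 - μ_{k'j}) ≥ 1 - K μ_max` gives the bound with
`d = K Σₖ D(Q_k ‖ Q_∅) + 1`.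
-/

open Finset Filter
open scoped Topology Classical

noncomputable section

/-- `P` is a probability distribution on the finite type `Z`. -/
def IsDist {Z : Type*} [Fintype Z] (P : Z → ℝ) : Prop :=
  (∀ z, 0 ≤ P z) ∧ ∑ z, P z = 1

/-- Kullback–Leibler divergence `D(P‖Q)` (natural logarithm). -/
def klDiv {Z : Type*} [Fintype Z] (P Q : Z → ℝ) : ℝ :=
  ∑ z, P z * Real.log (P z / Q z)

/-- `P` is absolutely continuous w.r.t. `Q`. -/
def AbsCont {Z : Type*} (P Q : Z → ℝ) : Prop :=
  ∀ z, Q z = 0 → P z = 0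

/-- The binary input vector having ones exactly at the indices in `U`. -/
def xU {K : ℕ} (U : Finset (Fin K)) : Fin K → Bool :=
  fun k => decide (k ∈ U)

/-- Bernoulli distribution on `Bool` with success probability `p`. -/
def bern (p : ℝ) : Bool → ℝ := fun b => if b then p else 1 - p

/-- `n`-fold memoryless extension of a channel `W`. -/
def prodChannel {A Z : Type*} (W : A → Z → ℝ) (n : ℕ)
    (x : Fin n → A) (z : Fin n → Z) : ℝ :=
  ∏ j, W (x j) (z j)

/-- `χ(ρ) := Σ_z (Σ_k ρ_k (Q_k(z) - Q_∅(z)))² / Q_∅(z)` for the warden channel `Wz`. -/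
def chiRho {K : ℕ} {Z : Type*} [Fintype Z] (Wz : (Fin K → Bool) → Z → ℝ)
    (ρ : Fin K → ℝ) : ℝ :=
  ∑ z, (∑ k, ρ k * (Wz (xU {k}) z - Wz (xU ∅) z)) ^ 2 / Wz (xU ∅) z

/-- The distribution `Q̂ⁿ` induced at the warden by a code with encoders `enc`, uniform
messages and uniform keys. -/
def Qhat {K n : ℕ} {Z : Type*} [Fintype Z] (Wz : (Fin K → Bool) → Z → ℝ)
    (M L : Fin K → ℕ) (enc : ∀ k, Fin (M k) × Fin (L k) → Fin n → Bool)
    (z : Fin n → Z) : ℝ :=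
  (∏ k, ((M k : ℝ) * (L k : ℝ)))⁻¹ *
    ∑ m : ∀ k, Fin (M k), ∑ l : ∀ k, Fin (L k),
      prodChannel Wz n (fun j k => enc k (m k, l k) j) z

/-- The average probability of decoding error of a code over the `n`-fold extension of
the channel `Wy`, with uniform messages and uniform keys. -/
def Pe {K n : ℕ} {Y : Type*} [Fintype Y] (Wy : (Fin K → Bool) → Y → ℝ)
    (M L : Fin K → ℕ) (enc : ∀ k, Fin (M k) × Fin (L k) → Fin n → Bool)
    (dec : (Fin n → Y) → (∀ k, Fin (L k)) → ∀ k, Fin (M k)) : ℝ :=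
  (∏ k, ((M k : ℝ) * (L k : ℝ)))⁻¹ *
    ∑ m : ∀ k, Fin (M k), ∑ l : ∀ k, Fin (L k), ∑ y : Fin n → Y,
      prodChannel Wy n (fun j k => enc k (m k, l k) j) y *
        (if dec y l = m then 0 else 1)

/-- `δₙ = D(Q̂ⁿ ‖ Q_∅^{⊗n})`. -/
def deltaN {K n : ℕ} {Z : Type*} [Fintype Z] (Wz : (Fin K → Bool) → Z → ℝ)
    (M L : Fin K → ℕ) (enc : ∀ k, Fin (M k) × Fin (L k) → Fin n → Bool) : ℝ :=
  klDiv (Qhat Wz M L enc) (fun z : Fin n → Z => ∏ j, Wz (xU ∅) (z j))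

/-- Mutual information `I(A;B)` of a finitely-supported joint distribution `p`. -/
def mutInfo {A B : Type*} [Fintype A] [Fintype B] (p : A → B → ℝ) : ℝ :=
  ∑ a, ∑ b, p a b * Real.log (p a b / ((∑ b', p a b') * (∑ a', p a' b)))

/-- Conditional mutual information `I(A;B|C)` of a finitely-supported joint
distribution `p`. -/
def condMutInfo {A B C : Type*} [Fintype A] [Fintype B] [Fintype C]
    (p : A → B → C → ℝ) : ℝ :=
  ∑ a, ∑ b, ∑ c, p a b c *
    Real.log (p a b c * (∑ a', ∑ b', p a' b' c) /
      ((∑ b', p a b' c) * (∑ a', p a' b c)))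

/-- Merge an assignment on the coordinates in `T` with one on the coordinates in `Tᶜ`. -/
def mergeT {K : ℕ} (T : Finset (Fin K)) (a : {i // i ∈ T} → Bool)
    (c : {i // i ∈ Tᶜ} → Bool) : Fin K → Bool :=
  fun i => if h : i ∈ T then a ⟨i, h⟩ else c ⟨i, Finset.mem_compl.mpr h⟩

/-- The channel `W_{Z|X[S]}` obtained from `W` by averaging the inputs outside `S`
according to the independent input distributions `π k`. -/
def margChannel {K : ℕ} {Z : Type*} [Fintype Z] (W : (Fin K → Bool) → Z → ℝ)
    (π : Fin K → Bool → ℝ) (S : Finset (Fin K))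
    (xs : {i // i ∈ S} → Bool) (z : Z) : ℝ :=
  ∑ c : {i // i ∈ Sᶜ} → Bool, (∏ i : {i // i ∈ Sᶜ}, π i.1 (c i)) * W (mergeT S xs c) z

/-- The distribution of user `k`'s random codeword (uniform message and key). -/
def cwDist {n M L : ℕ} (f : Fin M × Fin L → Fin n → Bool) (v : Fin n → Bool) : ℝ :=
  ((M : ℝ) * (L : ℝ))⁻¹ * ∑ p : Fin M × Fin L, (if f p = v then 1 else 0)

/-- `μ_{kj}`: the fraction of codewords of user `k` having a `1` in position `j`. -/
def muKJ {K n : ℕ} {M L : Fin K → ℕ} (f : ∀ k, Fin (M k) × Fin (L k) → Fin n → Bool)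
    (k : Fin K) (j : Fin n) : ℝ :=
  ((M k : ℝ) * (L k : ℝ))⁻¹ * ∑ p : Fin (M k) × Fin (L k), (if f k p j then 1 else 0)

lemma sub_le_mul_log_div {p q : ℝ} (hp : 0 ≤ p) (hq : 0 ≤ q) (hpq : q = 0 → p = 0) :
    p - q ≤ p * Real.log (p / q) := by
  rcases hp.eq_or_lt with rfl | hp
  · simpa using hq
  have hq : 0 < q := hq.lt_of_ne' fun h => hp.ne' (hpq h)
  have hlog := Real.one_sub_inv_le_log_of_pos (div_pos hp hq)
  rw [inv_div] at hlog
  calc p - q = p * (1 - q / p) := by field_simp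
    _ ≤ p * Real.log (p / q) := mul_le_mul_of_nonneg_left hlog hp.le

lemma klDiv_nonneg {Z : Type*} [Fintype Z] {P Q : Z → ℝ} (hP : IsDist P) (hQ : IsDist Q)
    (hPQ : AbsCont P Q) : 0 ≤ klDiv P Q :=
  calc (0 : ℝ) = ∑ z, (P z - Q z) := by rw [Finset.sum_sub_distrib, hP.2, hQ.2, sub_self]
    _ ≤ klDiv P Q := Finset.sum_le_sum fun z _ => sub_le_mul_log_div (hP.1 z) (hQ.1 z) (hPQ z)

lemma sum_prod_mul_apply {ι Z : Type*} [Fintype ι] [DecidableEq ι] [Fintype Z] (h : ι → Z → ℝ)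
    (hh : ∀ i, ∑ t, h i t = 1) (j : ι) (g : Z → ℝ) :
    ∑ z : ι → Z, (∏ i, h i (z i)) * g (z j) = ∑ t, h j t * g t := by
  have hfactor : ∀ i, ∑ t, h i t * (if i = j then g t else 1) =
      if i = j then ∑ t, h j t * g t else 1 := by
    intro i
    split_ifs with hij
    · subst hij; rfl
    · simpa using hh i
  calc ∑ z : ι → Z, (∏ i, h i (z i)) * g (z j)
      = ∑ z : ι → Z, ∏ i, h i (z i) * (if i = j then g (z i) else 1) := by
        simp only [Finset.prod_mul_distrib, Fintype.prod_ite_eq']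
    _ = ∏ i, ∑ t, h i t * (if i = j then g t else 1) :=
        (Fintype.prod_sum fun i t => h i t * if i = j then g t else 1).symm
    _ = ∑ t, h j t * g t := by simp only [hfactor, Fintype.prod_ite_eq']

lemma klDiv_pi {ι Z : Type*} [Fintype ι] [DecidableEq ι] [Fintype Z] (W Q : ι → Z → ℝ)
    (hW : ∀ i, ∑ t, W i t = 1) (hWQ : ∀ i, AbsCont (W i) (Q i)) :
    klDiv (fun z : ι → Z => ∏ i, W i (z i)) (fun z => ∏ i, Q i (z i)) =
      ∑ i, klDiv (W i) (Q i) := by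
  have hlog : ∀ z : ι → Z,
      (∏ i, W i (z i)) * Real.log ((∏ i, W i (z i)) / ∏ i, Q i (z i)) =
        ∑ i, (∏ i', W i' (z i')) * Real.log (W i (z i) / Q i (z i)) := by
    intro z
    by_cases hz : ∏ i, W i (z i) = 0
    · simp [hz]
    have hWz : ∀ i, W i (z i) ≠ 0 := fun i h => hz (Finset.prod_eq_zero (mem_univ i) h)
    rw [← Finset.prod_div_distrib,
      Real.log_prod fun i _ => div_ne_zero (hWz i) fun h => hWz i (hWQ i _ h), Finset.mul_sum]
  unfold klDiv
  rw [Finset.sum_congr rfl fun z _ => hlog z, Finset.sum_comm]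
  exact Finset.sum_congr rfl fun i _ => sum_prod_mul_apply W hW i fun t => Real.log (W i t / Q i t)

theorem mutInfo_eq_sum_klDiv_sub_klDiv {A B : Type*} [Fintype A] [Fintype B] (P : A → ℝ)
    (W : A → B → ℝ) (Q : B → ℝ) (hP : ∀ a, 0 ≤ P a) (hW : ∀ a, IsDist (W a))
    (hWQ : ∀ a, AbsCont (W a) Q) :
    mutInfo (fun a b => P a * W a b) =
      ∑ a, P a * klDiv (W a) Q - klDiv (fun b => ∑ a, P a * W a b) Q := by
  have hterm : ∀ a b, P a * W a b *
      Real.log (P a * W a b / ((∑ b', P a * W a b') * ∑ a', P a' * W a' b)) =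
        P a * (W a b * Real.log (W a b / Q b)) -
          P a * W a b * Real.log ((∑ a', P a' * W a' b) / Q b) := by
    intro a b
    rcases (hP a).eq_or_lt with hPa | hPa
    · simp [← hPa]
    rcases (hW a).1 b |>.eq_or_lt with hWab | hWab
    · simp [← hWab]
    have hQb : Q b ≠ 0 := fun h => hWab.ne' (hWQ a b h)
    have hRb : 0 < ∑ a', P a' * W a' b := lt_of_lt_of_le (mul_pos hPa hWab)
      (Finset.single_le_sum (fun a' _ => mul_nonneg (hP a') ((hW a').1 b)) (mem_univ a))
    rw [← Finset.mul_sum, (hW a).2, mul_one, mul_div_mul_left _ _ hPa.ne',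
      Real.log_div hWab.ne' hRb.ne', Real.log_div hWab.ne' hQb, Real.log_div hRb.ne' hQb]
    ring
  unfold mutInfo klDiv
  simp only [hterm, Finset.sum_sub_distrib]
  rw [Finset.sum_comm (f := fun a b => P a * W a b * Real.log (_ / Q b))]
  simp only [← Finset.mul_sum, ← Finset.sum_mul]

lemma isDist_prodChannel {A Z : Type*} [Fintype Z] {W : A → Z → ℝ} (hW : ∀ a, IsDist (W a))
    (n : ℕ) (x : Fin n → A) : IsDist (prodChannel W n x) :=
  ⟨fun z => Finset.prod_nonneg fun j _ => (hW _).1 _, by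
    simp only [prodChannel, ← Fintype.prod_sum, (hW _).2, Finset.prod_const_one]⟩

lemma absCont_prodChannel {A Z : Type*} {W : A → Z → ℝ} {Q : Z → ℝ}
    (hWQ : ∀ a, AbsCont (W a) Q) (n : ℕ) (x : Fin n → A) :
    AbsCont (prodChannel W n x) (fun z => ∏ j, Q (z j)) := fun z hz => by
  obtain ⟨j, -, hj⟩ := Finset.prod_eq_zero_iff.mp hz
  exact Finset.prod_eq_zero (mem_univ j) (hWQ _ _ hj)

lemma klDiv_prodChannel {A Z : Type*} [Fintype Z] {W : A → Z → ℝ} {Q : Z → ℝ}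
    (hW : ∀ a, IsDist (W a)) (hWQ : ∀ a, AbsCont (W a) Q) (n : ℕ) (x : Fin n → A) :
    klDiv (prodChannel W n x) (fun z => ∏ j, Q (z j)) = ∑ j, klDiv (W (x j)) Q :=
  klDiv_pi (fun j => W (x j)) (fun _ => Q) (fun _ => (hW _).2) (fun _ => hWQ _)

lemma sum_prod_fiberCount_mul {ι : Type*} [Fintype ι] [DecidableEq ι] {α β : ι → Type*}
    [∀ i, Fintype (α i)] [∀ i, Fintype (β i)] [∀ i, DecidableEq (β i)]
    (f : ∀ i, α i → β i) (G : (∀ i, β i) → ℝ) :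
    ∑ x : ∀ i, β i, (∏ i, ∑ a, if f i a = x i then (1 : ℝ) else 0) * G x =
      ∑ a : ∀ i, α i, G (fun i => f i (a i)) := by
  simp only [Fintype.prod_sum, Fintype.prod_ite_zero, Finset.prod_const_one, ← funext_iff,
    Finset.sum_mul, ite_mul, one_mul, zero_mul]
  rw [Finset.sum_comm]
  simp

section Code

variable {K n : ℕ} {M L : Fin K → ℕ} (f : ∀ k, Fin (M k) × Fin (L k) → Fin n → Bool)

lemma sum_prod_cwDist_mul (G : (Fin K → Fin n → Bool) → ℝ) :
    ∑ x, (∏ k, cwDist (f k) (x k)) * G x =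
      (∏ k, ((M k : ℝ) * L k))⁻¹ * ∑ p : ∀ k, Fin (M k) × Fin (L k), G (fun k => f k (p k)) := by
  simp only [cwDist, Finset.prod_mul_distrib, Finset.prod_inv_distrib, mul_assoc,
    ← Finset.mul_sum, sum_prod_fiberCount_mul]

lemma bern_muKJ (hM : ∀ k, 0 < M k) (hL : ∀ k, 0 < L k) (k : Fin K) (j : Fin n) (b : Bool) :
    bern (muKJ f k j) b =
      ((M k : ℝ) * L k)⁻¹ * ∑ p, if f k p j = b then 1 else 0 := by
  cases b
  · have hML : ((M k : ℝ) * L k) ≠ 0 := by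
      have := hM k; have := hL k; positivity
    have hsplit : ∑ p : Fin (M k) × Fin (L k), (if f k p j = false then (1 : ℝ) else 0) =
        (M k : ℝ) * L k - ∑ p, if f k p j = true then 1 else 0 := by
      rw [eq_sub_iff_add_eq, ← Finset.sum_add_distrib]
      have hone : ∀ p, (if f k p j = false then (1 : ℝ) else 0) +
          (if f k p j = true then 1 else 0) = 1 := fun p => by cases f k p j <;> simp
      simp [hone]
    rw [hsplit, mul_sub, inv_mul_cancel₀ hML]
    rfl
  · rfl

lemma bern_muKJ_nonneg (hM : ∀ k, 0 < M k) (hL : ∀ k, 0 < L k) (k : Fin K) (j : Fin n)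
    (b : Bool) : 0 ≤ bern (muKJ f k j) b := by
  rw [bern_muKJ f hM hL]
  exact mul_nonneg (by positivity) (Finset.sum_nonneg fun p _ => by split_ifs <;> norm_num)

lemma muKJ_mem_Icc (hM : ∀ k, 0 < M k) (hL : ∀ k, 0 < L k) (k : Fin K) (j : Fin n) :
    muKJ f k j ∈ Set.Icc 0 1 :=
  ⟨by simpa [bern] using bern_muKJ_nonneg f hM hL k j true,
    by simpa [bern] using bern_muKJ_nonneg f hM hL k j false⟩

lemma sum_prod_bern_muKJ_mul (hM : ∀ k, 0 < M k) (hL : ∀ k, 0 < L k) (j : Fin n)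
    (g : (Fin K → Bool) → ℝ) :
    ∑ v, (∏ k, bern (muKJ f k j) (v k)) * g v =
      (∏ k, ((M k : ℝ) * L k))⁻¹ * ∑ p : ∀ k, Fin (M k) × Fin (L k), g (fun k => f k (p k) j) := by
  simp only [bern_muKJ f hM hL, Finset.prod_mul_distrib, Finset.prod_inv_distrib, mul_assoc,
    ← Finset.mul_sum]
  rw [sum_prod_fiberCount_mul (fun k p => f k p j)]

lemma sum_prod_cwDist_mul_apply (hM : ∀ k, 0 < M k) (hL : ∀ k, 0 < L k) (j : Fin n)
    (g : (Fin K → Bool) → ℝ) :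
    ∑ x : Fin K → Fin n → Bool, (∏ k, cwDist (f k) (x k)) * g (fun k => x k j) =
      ∑ v, (∏ k, bern (muKJ f k j) (v k)) * g v := by
  rw [sum_prod_cwDist_mul, sum_prod_bern_muKJ_mul f hM hL]

lemma sum_prod_cwDist_mul_prodChannel {Z : Type*} [Fintype Z] (Wz : (Fin K → Bool) → Z → ℝ)
    (z : Fin n → Z) :
    ∑ x : Fin K → Fin n → Bool, (∏ k, cwDist (f k) (x k)) * prodChannel Wz n (fun j k => x k j) z =
      Qhat Wz M L f z := by
  rw [sum_prod_cwDist_mul, Qhat, ← Fintype.sum_prod_type',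
    ← (Equiv.arrowProdEquivProdArrow _ _ _).sum_comp]
  rfl

end Code

lemma one_sub_sum_le_prod_one_sub {ι : Type*} (s : Finset ι) {a : ι → ℝ}
    (h0 : ∀ i ∈ s, 0 ≤ a i) (h1 : ∀ i ∈ s, a i ≤ 1) :
    1 - ∑ i ∈ s, a i ≤ ∏ i ∈ s, (1 - a i) := by
  induction s using Finset.cons_induction with
  | empty => simp
  | cons i s hi ih =>
    simp only [Finset.mem_cons, forall_eq_or_imp] at h0 h1
    rw [Finset.prod_cons, Finset.sum_cons]
    have hprod := ih h0.2 h1.2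
    have hsum : 0 ≤ ∑ j ∈ s, a j := Finset.sum_nonneg h0.2
    nlinarith [mul_le_mul_of_nonneg_left hprod (sub_nonneg.mpr h1.1), mul_nonneg h0.1 hsum]

lemma xU_singleton_injective {K : ℕ} : Function.Injective fun k : Fin K => xU {k} :=
  fun k k' h => by simpa [xU] using congrFun h k

lemma prod_bern_xU_singleton {K : ℕ} (ρ : Fin K → ℝ) (k : Fin K) :
    ∏ i, bern (ρ i) (xU {k} i) = ρ k * ∏ i ∈ univ.erase k, (1 - ρ i) := by
  rw [← Finset.mul_prod_erase univ _ (mem_univ k)]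
  congr 1
  · simp [xU, bern]
  · exact Finset.prod_congr rfl fun i hi => by simp [xU, bern, Finset.ne_of_mem_erase hi]

lemma sum_mul_sub_le_sum_prod_bern_mul {K : ℕ} {ρ : Fin K → ℝ} {m C : ℝ}
    (hρ0 : ∀ k, 0 ≤ ρ k) (hρ1 : ∀ k, ρ k ≤ 1) (hρm : ∀ k, ρ k ≤ m)
    {D : (Fin K → Bool) → ℝ} (hD : ∀ v, 0 ≤ D v) (hDC : ∀ k, D (xU {k}) ≤ C) :
    ∑ k, ρ k * D (xU {k}) - K * C * m * ∑ k, ρ k ≤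
      ∑ v, (∏ k, bern (ρ k) (v k)) * D v := by
  have hsum_le : ∑ k, ρ k ≤ K * m := by
    simpa using Finset.sum_le_sum fun k (_ : k ∈ univ) => hρm k
  have hsingle : ∀ k, ρ k * D (xU {k}) - K * C * m * ρ k ≤
      (∏ i, bern (ρ i) (xU {k} i)) * D (xU {k}) := by
    intro k
    have hprod : 1 - K * m ≤ ∏ i ∈ univ.erase k, (1 - ρ i) :=
      calc 1 - K * m ≤ 1 - ∑ i ∈ univ.erase k, ρ i := by
            have := Finset.sum_le_univ_sum_of_nonneg (s := univ.erase k) hρ0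
            linarith
        _ ≤ _ := one_sub_sum_le_prod_one_sub _ (fun i _ => hρ0 i) (fun i _ => hρ1 i)
    have hKm : 0 ≤ K * m := (Finset.sum_nonneg fun i _ => hρ0 i).trans hsum_le
    rw [prod_bern_xU_singleton]
    nlinarith [mul_le_mul_of_nonneg_left hprod (mul_nonneg (hρ0 k) (hD (xU {k}))),
      mul_le_mul_of_nonneg_left (hDC k) (mul_nonneg hKm (hρ0 k))]
  calc ∑ k, ρ k * D (xU {k}) - K * C * m * ∑ k, ρ k
      = ∑ k, (ρ k * D (xU {k}) - K * C * m * ρ k) := by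
        rw [Finset.sum_sub_distrib, Finset.mul_sum]
    _ ≤ ∑ k, (∏ i, bern (ρ i) (xU {k} i)) * D (xU {k}) := Finset.sum_le_sum fun k _ => hsingle k
    _ = ∑ v ∈ univ.image fun k : Fin K => xU {k}, (∏ i, bern (ρ i) (v i)) * D v :=
        (Finset.sum_image (f := fun v => (∏ i, bern (ρ i) (v i)) * D v)
          fun k _ k' _ h => xU_singleton_injective h).symm
    _ ≤ ∑ v, (∏ k, bern (ρ k) (v k)) * D v :=
        Finset.sum_le_univ_sum_of_nonneg fun v =>
          mul_nonneg (Finset.prod_nonneg fun i _ => ?_) (hD v)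
  cases v i
  · simpa [bern] using hρ1 i
  · exact hρ0 i

lemma absCont_of_forall_nonempty {K : ℕ} {Z : Type*} {Wz : (Fin K → Bool) → Z → ℝ}
    (h : ∀ U : Finset (Fin K), U.Nonempty → AbsCont (Wz (xU U)) (Wz (xU ∅)))
    (x : Fin K → Bool) : AbsCont (Wz x) (Wz (xU ∅)) := by
  have hx : x = xU (univ.filter fun k => x k) := by funext k; simp [xU]
  rcases (univ.filter fun k => x k).eq_empty_or_nonempty with hU | hU
  · rw [hx, hU]
    exact fun _ => id
  · rw [hx]
    exact h _ hU

lemma mutInfo_code_eq {K n : ℕ} {Z : Type*} [Fintype Z] {Wz : (Fin K → Bool) → Z → ℝ}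
    (hWz : ∀ x, IsDist (Wz x)) (hAC : ∀ x, AbsCont (Wz x) (Wz (xU ∅)))
    {M L : Fin K → ℕ} (hM : ∀ k, 0 < M k) (hL : ∀ k, 0 < L k)
    (f : ∀ k, Fin (M k) × Fin (L k) → Fin n → Bool) :
    mutInfo (fun (x : Fin K → Fin n → Bool) (z : Fin n → Z) =>
        (∏ k, cwDist (f k) (x k)) * prodChannel Wz n (fun j k => x k j) z) =
      ∑ j, ∑ v, (∏ k, bern (muKJ f k j) (v k)) * klDiv (Wz v) (Wz (xU ∅)) -
        klDiv (Qhat Wz M L f) (fun z => ∏ j, Wz (xU ∅) (z j)) := by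
  have hP : ∀ x : Fin K → Fin n → Bool, 0 ≤ ∏ k, cwDist (f k) (x k) := fun x =>
    Finset.prod_nonneg fun k _ => mul_nonneg (by positivity)
      (Finset.sum_nonneg fun p _ => by split_ifs <;> norm_num)
  rw [mutInfo_eq_sum_klDiv_sub_klDiv _ _ _ hP (fun _ => isDist_prodChannel hWz n _)
    (fun _ => absCont_prodChannel hAC n _)]
  simp only [sum_prod_cwDist_mul_prodChannel, klDiv_prodChannel hWz hAC, Finset.mul_sum]
  rw [Finset.sum_comm]
  simp only [sum_prod_cwDist_mul_apply f hM hL _ fun v => klDiv (Wz v) (Wz (xU ∅))]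

theorem mutInfo_warden_lower_bound_general (K : ℕ) {Z : Type*} [Fintype Z]
    (Wz : (Fin K → Bool) → Z → ℝ) (hWz : ∀ x, IsDist (Wz x))
    (hACz : ∀ U : Finset (Fin K), U.Nonempty → AbsCont (Wz (xU U)) (Wz (xU ∅))) :
    ∃ d > 0, ∀ (n : ℕ), 0 < n → ∀ (M L : Fin K → ℕ), (∀ k, 0 < M k) → (∀ k, 0 < L k) →
      ∀ f : ∀ k, Fin (M k) × Fin (L k) → Fin n → Bool,
        (∑ j, ∑ k, muKJ f k j * klDiv (Wz (xU {k})) (Wz (xU ∅))) -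
            d * (⨆ k, ⨆ j, muKJ f k j) * (∑ k, ∑ j, muKJ f k j) -
            klDiv (Qhat Wz M L f) (fun z : Fin n → Z => ∏ j, Wz (xU ∅) (z j)) ≤
          mutInfo (fun (x : Fin K → Fin n → Bool) (z : Fin n → Z) =>
            (∏ k, cwDist (f k) (x k)) * prodChannel Wz n (fun j k => x k j) z) := by
  have hAC := absCont_of_forall_nonempty hACz
  have hD : ∀ v, 0 ≤ klDiv (Wz v) (Wz (xU ∅)) := fun v => klDiv_nonneg (hWz v) (hWz _) (hAC v)
  set C := ∑ k, klDiv (Wz (xU {k})) (Wz (xU ∅))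
  have hC : 0 ≤ C := Finset.sum_nonneg fun k _ => hD _
  refine ⟨K * C + 1, by positivity, fun n _ M L hM hL f => ?_⟩
  set μ := ⨆ k, ⨆ j, muKJ f k j
  have hμ0 : ∀ k j, 0 ≤ muKJ f k j := fun k j => (muKJ_mem_Icc f hM hL k j).1
  have hμ : ∀ k j, muKJ f k j ≤ μ := fun k j =>
    le_ciSup_of_le (Finite.bddAbove_range _) k (le_ciSup (Finite.bddAbove_range _) j)
  have hcoord : ∀ j, ∑ k, muKJ f k j * klDiv (Wz (xU {k})) (Wz (xU ∅)) -
      K * C * μ * ∑ k, muKJ f k j ≤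
        ∑ v, (∏ k, bern (muKJ f k j) (v k)) * klDiv (Wz v) (Wz (xU ∅)) := fun j =>
    sum_mul_sub_le_sum_prod_bern_mul (fun k => hμ0 k j) (fun k => (muKJ_mem_Icc f hM hL k j).2)
      (fun k => hμ k j) hD
      fun k => Finset.single_le_sum (fun i _ => hD (xU {i})) (mem_univ k)
  have hsum := Finset.sum_le_sum fun j (_ : j ∈ univ) => hcoord j
  rw [Finset.sum_sub_distrib, ← Finset.mul_sum, Finset.sum_comm (f := fun j k => muKJ f k j)]
    at hsum
  have hμS : 0 ≤ μ * ∑ k, ∑ j, muKJ f k j :=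
    mul_nonneg (Real.iSup_nonneg fun k => Real.iSup_nonneg (hμ0 k))
      (Finset.sum_nonneg fun k _ => Finset.sum_nonneg fun j _ => hμ0 k j)
  rw [mutInfo_code_eq hWz hAC hM hL]
  linarith

/-- lower bound on `I(X₁ⁿ,…,X_Kⁿ; Zⁿ)` for any code, where the codewords
`Xₖⁿ` are independent with distributions `cwDist (f k)` and `Zⁿ` is produced by `n`
memoryless uses of `Wz`. -/
theorem mutInfo_warden_lower_bound (K : ℕ) (hK : 2 ≤ K) {Z : Type*} [Fintype Z]
    (Wz : (Fin K → Bool) → Z → ℝ) (hWz : ∀ x, IsDist (Wz x))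
    (hACz : ∀ U : Finset (Fin K), U.Nonempty → AbsCont (Wz (xU U)) (Wz (xU ∅))) :
    ∃ d > 0, ∀ (n : ℕ), 0 < n → ∀ (M L : Fin K → ℕ), (∀ k, 0 < M k) → (∀ k, 0 < L k) →
      ∀ f : ∀ k, Fin (M k) × Fin (L k) → Fin n → Bool,
        (∑ j, ∑ k, muKJ f k j * klDiv (Wz (xU {k})) (Wz (xU ∅))) -
            d * (⨆ k, ⨆ j, muKJ f k j) * (∑ k, ∑ j, muKJ f k j) -
            klDiv (Qhat Wz M L f) (fun z : Fin n → Z => ∏ j, Wz (xU ∅) (z j)) ≤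
          mutInfo (fun (x : Fin K → Fin n → Bool) (z : Fin n → Z) =>
            (∏ k, cwDist (f k) (x k)) * prodChannel Wz n (fun j k => x k j) z) :=
  mutInfo_warden_lower_bound_general K Wz hWz hACz
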